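/- arXiv:1303.1225 — 2 statements merged into one kernel-verified Lean document; each statement's English description precedes it below -/
import Mathlib

section
/- Let w ∈ H¹(0,1) satisfy w(1) = w(0), suppose w is affine on [α,β], and suppose ∫_{Q₁} w(y) dy = 0. Then |||w|||² ≤ (1 + 2|Q₁|/(β − α)) ∫_{Q₁} |w'(y)|² dy. -/
open MeasureTheory Real Set
open scoped ComplexConjugate

noncomputable section

/-- `u ∈ H¹(0,1)` with (weak) derivative `u'`. -/
def IsH1 (u u' : ℝ → ℂ) : Prop :=
  MemLp u' 2 (volume.restrict (Ioo (0:ℝ) 1)) ∧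
  ∀ x ∈ Icc (0:ℝ) 1, u x = u 0 + ∫ t in (0:ℝ)..x, u' t

/-- `|||u|||² = |∫_{Q₁} u|² + ∫₀¹ |u'|²`. -/
def tripleNormSq (α β : ℝ) (u u' : ℝ → ℂ) : ℝ :=
  ‖∫ y in Ioo (0:ℝ) α ∪ Ioo β 1, u y‖ ^ 2 + ∫ y in Ioo (0:ℝ) 1, ‖u' y‖ ^ 2

/-!
On `(α, β)` the derivative of `w` equals the slope `c` of `w` almost everywhere (Lebesgue
differentiation), so the middle interval contributes `(β - α)‖c‖²` to `∫₀¹ |w'|²`. Periodicity turns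
`∫_{Q₁} w'` into `-(w β - w α)`, whose norm is `(β - α)‖c‖`, and Cauchy–Schwarz on `Q₁` bounds its
square by `|Q₁| ∫_{Q₁} |w'|²`. The mean condition removes the first term of `|||w|||²`.
-/

theorem norm_integral_sq_le_measureReal_mul_integral_norm_sq {X E : Type*} [MeasurableSpace X]
    [NormedAddCommGroup E] [NormedSpace ℝ E] {μ : Measure X} [IsFiniteMeasure μ] {f : X → E}
    (hf : MemLp f 2 μ) :
    ‖∫ x, f x ∂μ‖ ^ 2 ≤ μ.real univ * ∫ x, ‖f x‖ ^ 2 ∂μ := by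
  rcases eq_zero_or_neZero μ with rfl | hμ
  · simp
  have hjensen : (⨍ x, ‖f x‖ ∂μ) ^ 2 ≤ ⨍ x, ‖f x‖ ^ 2 ∂μ :=
    (convexOn_pow 2).map_average_le (continuousOn_pow 2) isClosed_Ici
      (.of_forall fun x => norm_nonneg (f x)) (hf.integrable one_le_two).norm hf.norm.integrable_sq
  rw [average_eq, average_eq, smul_eq_mul, smul_eq_mul, mul_pow, inv_pow,
    inv_mul_le_iff₀ (pow_pos measureReal_univ_pos 2), sq (μ.real univ), mul_assoc,
    mul_inv_cancel_left₀ measureReal_univ_ne_zero] at hjensen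
  calc ‖∫ x, f x ∂μ‖ ^ 2 ≤ (∫ x, ‖f x‖ ∂μ) ^ 2 :=
        pow_le_pow_left₀ (norm_nonneg _) (norm_integral_le_integral_norm f) 2
    _ ≤ μ.real univ * ∫ x, ‖f x‖ ^ 2 ∂μ := hjensen

theorem MeasureTheory.IntegrableOn.intervalIntegrable_of_mem_Icc {E : Type*}
    [NormedAddCommGroup E] {f : ℝ → E} {a b x y : ℝ} (hf : IntegrableOn f (Ioo a b))
    (hx : x ∈ Icc a b) (hy : y ∈ Icc a b) : IntervalIntegrable f volume x y := by
  have hab : a ≤ b := hx.1.trans hx.2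
  refine ((intervalIntegrable_iff_integrableOn_Ioo_of_le hab).2 hf).mono_set ?_
  rw [uIcc_of_le hab]
  exact uIcc_subset_Icc hx hy

section Interval

variable {E : Type*} [NormedAddCommGroup E] [NormedSpace ℝ E] {f : ℝ → E}

theorem ae_restrict_Ioo_eq_of_intervalIntegral_eq_smul [CompleteSpace E] {a b : ℝ} {c : E}
    (hf : IntervalIntegrable f volume a b)
    (h : ∀ x ∈ Icc a b, ∫ t in a..x, f t = (x - a) • c) :
    ∀ᵐ x ∂volume.restrict (Ioo a b), f x = c := by
  rw [ae_restrict_iff' measurableSet_Ioo]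
  filter_upwards [hf.ae_hasDerivAt_integral] with x hderiv hx
  have hab : a ≤ b := (hx.1.trans hx.2).le
  have hlin : HasDerivAt (fun y => (y - a) • c) c x := by
    simpa using ((hasDerivAt_id x).sub_const a).smul_const c
  refine (hderiv (Ioo_subset_Icc_self.trans (uIcc_of_le hab).symm.subset hx) a
    (by simp [hab])).unique (hlin.congr_of_eventuallyEq ?_)
  filter_upwards [Icc_mem_nhds hx.1 hx.2] with y hy using h y hy

variable {a b c d : ℝ}

theorem setIntegral_Ioo_union_Ioo (hab : a ≤ b) (hbc : b ≤ c) (hcd : c ≤ d)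
    (hf : IntegrableOn f (Ioo a d)) :
    ∫ x in Ioo a b ∪ Ioo c d, f x = (∫ x in a..b, f x) + ∫ x in c..d, f x := by
  have hdisj : Disjoint (Ioo a b) (Ioo c d) :=
    disjoint_left.2 fun x hx hx' => (hx.2.trans_le hbc).not_gt hx'.1
  rw [setIntegral_union hdisj measurableSet_Ioo
      (hf.mono_set (Ioo_subset_Ioo le_rfl (hbc.trans hcd)))
      (hf.mono_set (Ioo_subset_Ioo (hab.trans hbc) le_rfl)),
    intervalIntegral.integral_of_le hab, intervalIntegral.integral_of_le hcd,
    integral_Ioc_eq_integral_Ioo, integral_Ioc_eq_integral_Ioo]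

theorem setIntegral_Ioo_eq_setIntegral_union_add (hab : a ≤ b) (hbc : b ≤ c) (hcd : c ≤ d)
    (hf : IntegrableOn f (Ioo a d)) :
    ∫ x in Ioo a d, f x = (∫ x in Ioo a b ∪ Ioo c d, f x) + ∫ x in Ioo b c, f x := by
  have hb : b ∈ Icc a d := ⟨hab, hbc.trans hcd⟩
  have hc : c ∈ Icc a d := ⟨hab.trans hbc, hcd⟩
  have ha : a ∈ Icc a d := ⟨le_rfl, hb.2.trans' hab⟩
  have hd : d ∈ Icc a d := ⟨ha.2, le_rfl⟩
  rw [setIntegral_Ioo_union_Ioo hab hbc hcd hf, ← integral_Ioc_eq_integral_Ioo,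
    ← integral_Ioc_eq_integral_Ioo, ← intervalIntegral.integral_of_le ha.2,
    ← intervalIntegral.integral_of_le hbc,
    ← intervalIntegral.integral_add_adjacent_intervals (hf.intervalIntegrable_of_mem_Icc ha hb)
      (hf.intervalIntegrable_of_mem_Icc hb hd),
    ← intervalIntegral.integral_add_adjacent_intervals (hf.intervalIntegrable_of_mem_Icc hb hc)
      (hf.intervalIntegrable_of_mem_Icc hc hd)]
  abel

theorem volume_real_Ioo_union_Ioo (hab : a ≤ b) (hbc : b ≤ c) (hcd : c ≤ d) :
    volume.real (Ioo a b ∪ Ioo c d) = b - a + (d - c) := by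
  rw [measureReal_union (disjoint_left.2 fun x hx hx' => (hx.2.trans_le hbc).not_gt hx'.1)
    measurableSet_Ioo measure_Ioo_lt_top.ne measure_Ioo_lt_top.ne, volume_real_Ioo_of_le hab,
    volume_real_Ioo_of_le hcd]

theorem norm_setIntegral_Ioo_union_Ioo_sq_le (hab : a ≤ b) (hbc : b ≤ c) (hcd : c ≤ d)
    (hf : MemLp f 2 (volume.restrict (Ioo a d))) :
    ‖∫ x in Ioo a b ∪ Ioo c d, f x‖ ^ 2 ≤
      (b - a + (d - c)) * ∫ x in Ioo a b ∪ Ioo c d, ‖f x‖ ^ 2 := by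
  have hsub : Ioo a b ∪ Ioo c d ⊆ Ioo a d :=
    union_subset (Ioo_subset_Ioo_right (hbc.trans hcd)) (Ioo_subset_Ioo_left (hab.trans hbc))
  have : IsFiniteMeasure (volume.restrict (Ioo a b ∪ Ioo c d)) :=
    isFiniteMeasure_restrict.2 ((measure_mono hsub).trans_lt measure_Ioo_lt_top).ne
  rw [← volume_real_Ioo_union_Ioo hab hbc hcd, ← measureReal_restrict_apply_univ]
  exact norm_integral_sq_le_measureReal_mul_integral_norm_sq
    (hf.mono_measure (Measure.restrict_mono hsub le_rfl))

end Interval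

namespace IsH1

variable {u u' : ℝ → ℂ}

theorem integrableOn (hu : IsH1 u u') : IntegrableOn u' (Ioo 0 1) :=
  hu.1.integrable one_le_two

theorem integrableOn_norm_sq (hu : IsH1 u u') : IntegrableOn (fun x => ‖u' x‖ ^ 2) (Ioo 0 1) :=
  hu.1.norm.integrable_sq

theorem intervalIntegral_eq_sub (hu : IsH1 u u') {a b : ℝ} (ha : a ∈ Icc (0 : ℝ) 1)
    (hb : b ∈ Icc (0 : ℝ) 1) : ∫ t in a..b, u' t = u b - u a := by
  have h0 : (0 : ℝ) ∈ Icc (0 : ℝ) 1 := ⟨le_rfl, zero_le_one⟩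
  rw [← intervalIntegral.integral_interval_sub_left
    (hu.integrableOn.intervalIntegrable_of_mem_Icc h0 hb)
    (hu.integrableOn.intervalIntegrable_of_mem_Icc h0 ha), hu.2 b hb, hu.2 a ha]
  ring

variable {a b : ℝ}

theorem setIntegral_Ioo_union_Ioo_deriv (hu : IsH1 u u') (ha : 0 ≤ a) (hab : a ≤ b)
    (hb : b ≤ 1) : ∫ y in Ioo 0 a ∪ Ioo b 1, u' y = u a - u 0 + (u 1 - u b) := by
  rw [setIntegral_Ioo_union_Ioo ha hab hb hu.integrableOn,
    hu.intervalIntegral_eq_sub ⟨le_rfl, zero_le_one⟩ ⟨ha, hab.trans hb⟩,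
    hu.intervalIntegral_eq_sub ⟨ha.trans hab, hb⟩ ⟨zero_le_one, le_rfl⟩]

theorem setIntegral_Ioo_norm_sq_deriv_of_affine (hu : IsH1 u u') (ha : 0 ≤ a) (hab : a ≤ b)
    (hb : b ≤ 1) {c : ℂ} (haff : ∀ y ∈ Icc a b, u y = c * ((y : ℂ) - a) + u a) :
    ∫ y in Ioo a b, ‖u' y‖ ^ 2 = (b - a) * ‖c‖ ^ 2 := by
  have haI : a ∈ Icc (0 : ℝ) 1 := ⟨ha, hab.trans hb⟩
  have hslope : ∀ᵐ y ∂volume.restrict (Ioo a b), u' y = c :=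
    ae_restrict_Ioo_eq_of_intervalIntegral_eq_smul
      (hu.integrableOn.intervalIntegrable_of_mem_Icc haI ⟨ha.trans hab, hb⟩) fun x hx => by
        rw [hu.intervalIntegral_eq_sub haI ⟨ha.trans hx.1, hx.2.trans hb⟩, haff x hx,
          Complex.real_smul]
        push_cast
        ring
  rw [integral_congr_ae (g := fun _ => ‖c‖ ^ 2) (hslope.mono fun y hy => by simp only [hy]),
    setIntegral_const, volume_real_Ioo_of_le hab, smul_eq_mul]

end IsH1

theorem stmt_8 (α β : ℝ) (hα : 0 < α) (hαβ : α < β) (hβ : β < 1)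
    (w w' : ℝ → ℂ) (hw : IsH1 w w')
    (hper : w 1 = w 0)
    (haff : ∀ y ∈ Icc α β,
      w y = (w β - w α) * ((β : ℂ) - α)⁻¹ * ((y : ℂ) - α) + w α)
    (hmean : (∫ y in Ioo (0:ℝ) α ∪ Ioo β 1, w y) = 0) :
    tripleNormSq α β w w' ≤
      (1 + 2 * (1 - β + α) / (β - α)) *
        ∫ y in Ioo (0:ℝ) α ∪ Ioo β 1, ‖w' y‖ ^ 2 := by
  have hd : 0 < β - α := sub_pos.2 hαβ
  set c : ℂ := (w β - w α) * ((β : ℂ) - α)⁻¹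
  set A := ∫ y in Ioo (0:ℝ) α ∪ Ioo β 1, ‖w' y‖ ^ 2
  have hmiddle : ∫ y in Ioo α β, ‖w' y‖ ^ 2 = (β - α) * ‖c‖ ^ 2 :=
    hw.setIntegral_Ioo_norm_sq_deriv_of_affine hα.le hαβ.le hβ.le haff
  have hflux : ∫ y in Ioo (0:ℝ) α ∪ Ioo β 1, w' y = -(((β - α : ℝ) : ℂ) * c) := by
    have hne : (β : ℂ) - α ≠ 0 := by exact_mod_cast hd.ne'
    rw [hw.setIntegral_Ioo_union_Ioo_deriv hα.le hαβ.le hβ.le, hper]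
    push_cast
    rw [mul_comm, inv_mul_cancel_right₀ hne]
    ring
  have hCS : ((β - α) * ‖c‖) ^ 2 ≤ (1 - β + α) * A := by
    have := norm_setIntegral_Ioo_union_Ioo_sq_le hα.le hαβ.le hβ.le hw.1
    rwa [hflux, norm_neg, norm_mul, Complex.norm_real, Real.norm_of_nonneg hd.le,
      show α - 0 + (1 - β) = 1 - β + α by ring] at this
  have hA : 0 ≤ A := setIntegral_nonneg (measurableSet_Ioo.union measurableSet_Ioo)
    fun y _ => by positivity
  have hmiddle_le : (β - α) * ‖c‖ ^ 2 ≤ 2 * (1 - β + α) / (β - α) * A := by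
    rw [div_mul_eq_mul_div, le_div_iff₀ hd]
    nlinarith
  rw [tripleNormSq, hmean, norm_zero,
    setIntegral_Ioo_eq_setIntegral_union_add hα.le hαβ.le hβ.le hw.integrableOn_norm_sq, hmiddle]
  linarith

end
end

section
/- Let θ₁ ∈ [0,1), let k ≥ 1, and let F₁ be a k-dimensional ℂ-linear subspace of V(θ₁). For every ε > 0 there exists δ > 0 such that for every θ₂ ∈ [0,1) with |θ₂ − θ₁| ≤ δ there exists a k-dimensional ℂ-linear subspace F₂ of V(θ₂) with max( dist(F₁,F₂), dist(F₂,F₁) ) < ε, where dist(N,M) := sup over u ∈ N with ‖u‖_{H¹} = 1 of inf over v ∈ M of ‖u − v‖_{H¹}, and ‖u‖_{H¹}² := ∫₀¹ |u|² + ∫₀¹ |u'|². -/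
open MeasureTheory Real Set
open scoped ComplexConjugate

noncomputable section

/-- The set `V(θ)` of `θ`-quasiperiodic `H¹(0,1)` functions whose derivative
vanishes a.e. on `Q₁ = (0,α) ∪ (β,1)`. -/
def VSet (α β θ : ℝ) : Set (ℝ → ℂ) :=
  {u | ∃ u' : ℝ → ℂ, IsH1 u u' ∧
    u 1 = Complex.exp (2 * Real.pi * Complex.I * θ) * u 0 ∧
    ∀ᵐ y ∂volume, y ∈ Ioo (0:ℝ) α ∪ Ioo β 1 → u' y = 0}

/-- The squared `H¹(0,1)` norm, `∫₀¹ |u|² + ∫₀¹ |u'|²` (for `H¹` functions the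
classical derivative exists a.e. and coincides with the weak derivative). -/
def H1NormSq (u : ℝ → ℂ) : ℝ :=
  (∫ y in Ioo (0:ℝ) 1, ‖u y‖ ^ 2) + ∫ y in Ioo (0:ℝ) 1, ‖deriv u y‖ ^ 2

/-- `dist(N,M) = sup_{u ∈ N, ‖u‖_{H¹}=1} inf_{v ∈ M} ‖u − v‖_{H¹}`. -/
def distS (Nn Mm : Set (ℝ → ℂ)) : ℝ :=
  sSup {r : ℝ | ∃ u ∈ Nn, H1NormSq u = 1 ∧
    r = sInf {s : ℝ | ∃ v ∈ Mm, s = Real.sqrt (H1NormSq (u - v))}}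

/-!
Write `γ = e^{2πiθ₂} - e^{2πiθ₁}` and let `ψ` be the ramp rising linearly from `0` at `α` to `1`
at `β`, so that `ψ' = 0` on `Q₁` and `ψ(1) - ψ(0) = 1`. The correction `Tu = u + γ u(0) ψ` is an
injective linear map sending `V(θ₁)` into `V(θ₂)`, so `F₂ = T F₁` has dimension `k`. Every
`u ∈ V(θ)` is constant on `(0,α)`, whence `α |u(0)|² ≤ ‖u‖²`; as `Tu - u = γ u(0) ψ` and
`(Tu)(0) = u(0)`, both distances between `F₁` and `T F₁` are at most `|γ| ‖ψ‖ / √α`, and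
`|γ| ≤ 2π |θ₂ - θ₁|`. Only the homogeneity `‖cψ‖ = |c| ‖ψ‖` enters, never the value of `‖ψ‖`.
-/

def phase (θ : ℝ) : ℂ := Complex.exp (2 * π * Complex.I * θ)

lemma norm_phase_sub_phase_le (θ₁ θ₂ : ℝ) : ‖phase θ₂ - phase θ₁‖ ≤ 2 * π * |θ₂ - θ₁| := by
  have hfactor : phase θ₂ - phase θ₁ =
      phase θ₁ * (Complex.exp (Complex.I * ((2 * π * (θ₂ - θ₁) : ℝ) : ℂ)) - 1) := by
    rw [phase, phase, mul_sub, mul_one, ← Complex.exp_add]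
    push_cast
    ring_nf
  have hphase : ‖phase θ₁‖ = 1 := by
    rw [phase, show 2 * π * Complex.I * θ₁ = ((2 * π * θ₁ : ℝ) : ℂ) * Complex.I by push_cast; ring]
    exact Complex.norm_exp_ofReal_mul_I _
  rw [hfactor, norm_mul, hphase, one_mul]
  refine norm_exp_I_mul_ofReal_sub_one_le.trans_eq ?_
  rw [Real.norm_eq_abs, abs_mul, abs_of_pos (by positivity)]

lemma H1NormSq_nonneg (u : ℝ → ℂ) : 0 ≤ H1NormSq u :=
  add_nonneg (integral_nonneg fun _ => by positivity) (integral_nonneg fun _ => by positivity)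

lemma H1NormSq_const_smul (c : ℂ) (u : ℝ → ℂ) : H1NormSq (c • u) = ‖c‖ ^ 2 * H1NormSq u := by
  have hderiv : deriv (c • u) = c • deriv u := deriv_const_mul_field' c
  simp only [H1NormSq, hderiv, Pi.smul_apply, smul_eq_mul, norm_mul, mul_pow, integral_const_mul,
    mul_add]

lemma H1NormSq_sub_comm (u v : ℝ → ℂ) : H1NormSq (u - v) = H1NormSq (v - u) := by
  rw [← neg_sub, ← neg_one_smul ℂ, H1NormSq_const_smul, norm_neg, norm_one, one_pow, one_mul]

lemma distS_le {A B : Set (ℝ → ℂ)} {r : ℝ} (hr : 0 ≤ r)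
    (h : ∀ u ∈ A, H1NormSq u = 1 → ∃ v ∈ B, H1NormSq (u - v) ≤ r ^ 2) : distS A B ≤ r := by
  refine Real.sSup_le ?_ hr
  rintro _ ⟨u, hu, hnorm, rfl⟩
  obtain ⟨v, hv, hle⟩ := h u hu hnorm
  refine csInf_le_of_le ⟨0, ?_⟩ ⟨v, hv, rfl⟩ ((Real.sqrt_le_sqrt hle).trans_eq (Real.sqrt_sq hr))
  rintro _ ⟨w, -, rfl⟩
  exact Real.sqrt_nonneg _

namespace IsH1

variable {u u' v v' : ℝ → ℂ}

lemma intervalIntegrable (hu : IsH1 u u') {x : ℝ} (hx : x ∈ Icc (0:ℝ) 1) :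
    IntervalIntegrable u' volume 0 x :=
  ((intervalIntegrable_iff_integrableOn_Ioo_of_le zero_le_one).2
    (hu.1.integrable one_le_two)).mono_set (by simpa [uIcc_of_le, hx.1] using Icc_subset_Icc_right hx.2)

lemma continuousOn (hu : IsH1 u u') : ContinuousOn u (Icc 0 1) := by
  have hprim := intervalIntegral.continuousOn_primitive_interval' (hu.intervalIntegrable
    (right_mem_Icc.2 zero_le_one)) (left_mem_uIcc (a := (0:ℝ)) (b := 1))
  rw [uIcc_of_le zero_le_one] at hprim
  exact (continuousOn_const.add hprim).congr hu.2

lemma add (hu : IsH1 u u') (hv : IsH1 v v') : IsH1 (u + v) (u' + v') := by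
  refine ⟨hu.1.add hv.1, fun x hx => ?_⟩
  simp only [Pi.add_apply]
  rw [hu.2 x hx, hv.2 x hx, intervalIntegral.integral_add (hu.intervalIntegrable hx) (hv.intervalIntegrable hx)]
  ring

lemma const_smul (hu : IsH1 u u') (c : ℂ) : IsH1 (c • u) (c • u') := by
  refine ⟨hu.1.const_smul c, fun x hx => ?_⟩
  simp only [Pi.smul_apply, smul_eq_mul]
  rw [intervalIntegral.integral_const_mul, hu.2 x hx, mul_add]

end IsH1

def rampDeriv (α β : ℝ) : ℝ → ℂ := (Ioo α β).indicator fun _ => (((β - α)⁻¹ : ℝ) : ℂ)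

def ramp (α β x : ℝ) : ℂ := ∫ t in (0:ℝ)..x, rampDeriv α β t

section Ramp

variable {α β : ℝ}

lemma ramp_zero : ramp α β 0 = 0 := intervalIntegral.integral_same

lemma ramp_one (hα : 0 ≤ α) (hαβ : α < β) (hβ : β ≤ 1) : ramp α β 1 = 1 := by
  have hsub : Ioo α β ⊆ Ioc 0 1 := fun y hy => ⟨hα.trans_lt hy.1, hy.2.le.trans hβ⟩
  rw [ramp, intervalIntegral.integral_of_le zero_le_one, rampDeriv,
    setIntegral_indicator measurableSet_Ioo, inter_eq_self_of_subset_right hsub, setIntegral_const,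
    Real.volume_real_Ioo_of_le hαβ.le, Complex.real_smul]
  push_cast
  exact mul_inv_cancel₀ (sub_ne_zero.2 (mod_cast hαβ.ne'))

lemma isH1_ramp : IsH1 (ramp α β) (rampDeriv α β) :=
  ⟨memLp_indicator_const 2 measurableSet_Ioo _ (Or.inr (measure_ne_top _ _)),
    fun x _ => by rw [ramp_zero, zero_add]; rfl⟩

end Ramp

def phaseCorrection (α β : ℝ) (γ : ℂ) : (ℝ → ℂ) →ₗ[ℂ] (ℝ → ℂ) where
  toFun u := u + (γ * u 0) • ramp α β
  map_add' u v := by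
    ext x
    simp only [Pi.add_apply, Pi.smul_apply, smul_eq_mul]
    ring
  map_smul' c u := by
    ext x
    simp only [Pi.add_apply, Pi.smul_apply, smul_eq_mul, RingHom.id_apply]
    ring

section PhaseCorrection

variable {α β : ℝ} {γ : ℂ}

lemma phaseCorrection_apply (u : ℝ → ℂ) :
    phaseCorrection α β γ u = u + (γ * u 0) • ramp α β := rfl

lemma phaseCorrection_apply_zero (u : ℝ → ℂ) : phaseCorrection α β γ u 0 = u 0 := by
  simp [phaseCorrection_apply, ramp_zero]

lemma phaseCorrection_sub_self (u : ℝ → ℂ) :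
    phaseCorrection α β γ u - u = (γ * u 0) • ramp α β := by
  rw [phaseCorrection_apply, add_sub_cancel_left]

lemma phaseCorrection_injective : Function.Injective (phaseCorrection α β γ) := by
  refine (injective_iff_map_eq_zero _).2 fun u hu => ?_
  have hu0 : u 0 = 0 := by simpa [phaseCorrection_apply_zero] using congrFun hu 0
  rwa [phaseCorrection_apply, hu0, mul_zero, zero_smul, add_zero] at hu

end PhaseCorrection

namespace VSet

variable {α β θ : ℝ} {u : ℝ → ℂ}

lemma phaseCorrection_mem (hα : 0 ≤ α) (hαβ : α < β) (hβ : β ≤ 1) (hu : u ∈ VSet α β θ)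
    (θ' : ℝ) : phaseCorrection α β (phase θ' - phase θ) u ∈ VSet α β θ' := by
  obtain ⟨u', hH1, hbd, hae⟩ := hu
  refine ⟨u' + ((phase θ' - phase θ) * u 0) • rampDeriv α β,
    hH1.add (isH1_ramp.const_smul _), ?_, ?_⟩
  · simp only [phaseCorrection_apply, Pi.add_apply, Pi.smul_apply, smul_eq_mul,
      ramp_one hα hαβ hβ, ramp_zero, hbd]
    rw [phase, phase]
    ring
  · filter_upwards [hae] with y hy hyQ
    have hy' : y ∉ Ioo α β := by
      rintro ⟨hαy, hyβ⟩
      rcases hyQ with h | h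
      exacts [h.2.not_gt hαy, h.1.not_gt hyβ]
    simp [hy hyQ, rampDeriv, indicator_of_notMem hy']

lemma eqOn_apply_zero (hα1 : α ≤ 1) (hu : u ∈ VSet α β θ) : EqOn u (fun _ => u 0) (Ioo 0 α) := by
  obtain ⟨u', ⟨-, hrep⟩, -, hae⟩ := hu
  intro x hx
  have hzero : u' =ᵐ[volume.restrict (Ioc 0 x)] 0 := by
    filter_upwards [ae_restrict_of_ae hae, ae_restrict_mem measurableSet_Ioc] with y hy hyx
    exact hy (Or.inl ⟨hyx.1, hyx.2.trans_lt hx.2⟩)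
  rw [hrep x ⟨hx.1.le, hx.2.le.trans hα1⟩, intervalIntegral.integral_of_le hx.1.le,
    integral_congr_ae hzero, Pi.zero_def, integral_zero, add_zero]

lemma mul_sq_norm_apply_zero_le (hα : 0 ≤ α) (hα1 : α ≤ 1) (hu : u ∈ VSet α β θ) :
    α * ‖u 0‖ ^ 2 ≤ H1NormSq u := by
  obtain ⟨u', hH1, -⟩ := id hu
  have hint : IntegrableOn (fun y => ‖u y‖ ^ 2) (Ioo 0 1) :=
    ((hH1.continuousOn.norm.pow 2).integrableOn_Icc).mono_set Ioo_subset_Icc_self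
  have hconst : ∫ y in Ioo 0 α, ‖u y‖ ^ 2 = α * ‖u 0‖ ^ 2 := by
    rw [setIntegral_congr_fun measurableSet_Ioo fun x hx => by rw [eqOn_apply_zero hα1 hu hx],
      setIntegral_const, Real.volume_real_Ioo_of_le hα, sub_zero, smul_eq_mul]
  have hmono : ∫ y in Ioo 0 α, ‖u y‖ ^ 2 ≤ ∫ y in Ioo (0:ℝ) 1, ‖u y‖ ^ 2 :=
    setIntegral_mono_set hint (.of_forall fun _ => by positivity)
      (Ioo_subset_Ioo_right hα1).eventuallyLE
  have hderiv : 0 ≤ ∫ y in Ioo (0:ℝ) 1, ‖deriv u y‖ ^ 2 := integral_nonneg fun _ => by positivity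
  rw [H1NormSq]
  linarith

lemma H1NormSq_apply_zero_smul_le (hα : 0 < α) (hα1 : α ≤ 1) (hu : u ∈ VSet α β θ)
    (c : ℂ) (f : ℝ → ℂ) :
    H1NormSq ((c * u 0) • f) ≤ ‖c‖ ^ 2 * (α⁻¹ * H1NormSq f) * H1NormSq u := by
  have hu0 : ‖u 0‖ ^ 2 ≤ α⁻¹ * H1NormSq u := by
    rw [le_inv_mul_iff₀ hα]
    exact mul_sq_norm_apply_zero_le hα.le hα1 hu
  rw [H1NormSq_const_smul, norm_mul, mul_pow]
  calc ‖c‖ ^ 2 * ‖u 0‖ ^ 2 * H1NormSq f ≤ ‖c‖ ^ 2 * (α⁻¹ * H1NormSq u) * H1NormSq f := by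
        gcongr
        exact H1NormSq_nonneg f
    _ = ‖c‖ ^ 2 * (α⁻¹ * H1NormSq f) * H1NormSq u := by ring

end VSet

section Distance

variable {α β : ℝ} {S : Set (ℝ → ℂ)}

lemma distS_image_phaseCorrection_le (hα : 0 < α) (hα1 : α ≤ 1) {θ : ℝ} (hS : S ⊆ VSet α β θ)
    (γ : ℂ) : distS S (phaseCorrection α β γ '' S) ≤ ‖γ‖ * √(α⁻¹ * H1NormSq (ramp α β)) := by
  refine distS_le (by positivity) fun u hu hnorm => ⟨_, mem_image_of_mem _ hu, ?_⟩
  rw [H1NormSq_sub_comm, phaseCorrection_sub_self, mul_pow,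
    Real.sq_sqrt (mul_nonneg (inv_nonneg.2 hα.le) (H1NormSq_nonneg _))]
  simpa [hnorm] using VSet.H1NormSq_apply_zero_smul_le hα hα1 (hS hu) γ (ramp α β)

lemma distS_phaseCorrection_image_le (hα : 0 < α) (hα1 : α ≤ 1) {γ : ℂ} {θ : ℝ}
    (hS : phaseCorrection α β γ '' S ⊆ VSet α β θ) :
    distS (phaseCorrection α β γ '' S) S ≤ ‖γ‖ * √(α⁻¹ * H1NormSq (ramp α β)) := by
  refine distS_le (by positivity) ?_
  rintro _ ⟨u, hu, rfl⟩ hnorm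
  refine ⟨u, hu, ?_⟩
  rw [phaseCorrection_sub_self, ← phaseCorrection_apply_zero (α := α) (β := β) (γ := γ) u, mul_pow,
    Real.sq_sqrt (mul_nonneg (inv_nonneg.2 hα.le) (H1NormSq_nonneg _))]
  simpa [hnorm] using
    VSet.H1NormSq_apply_zero_smul_le hα hα1 (hS (mem_image_of_mem _ hu)) γ (ramp α β)

end Distance

theorem stmt_15_general (α β : ℝ) (hα : 0 < α) (hαβ : α < β) (hβ : β < 1)
    (θ₁ : ℝ) (k : ℕ)
    (F₁ : Submodule ℂ (ℝ → ℂ)) (hF₁ : (F₁ : Set (ℝ → ℂ)) ⊆ VSet α β θ₁)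
    (hdim : Module.finrank ℂ F₁ = k) :
    ∀ ε > (0:ℝ), ∃ δ > (0:ℝ), ∀ θ₂ ∈ Ico (0:ℝ) 1, |θ₂ - θ₁| ≤ δ →
      ∃ F₂ : Submodule ℂ (ℝ → ℂ), (F₂ : Set (ℝ → ℂ)) ⊆ VSet α β θ₂ ∧
        Module.finrank ℂ F₂ = k ∧
        max (distS (F₁ : Set (ℝ → ℂ)) (F₂ : Set (ℝ → ℂ)))
            (distS (F₂ : Set (ℝ → ℂ)) (F₁ : Set (ℝ → ℂ))) < ε := by
  intro ε hε
  set C := √(α⁻¹ * H1NormSq (ramp α β))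
  refine ⟨ε / (2 * π * (C + 1)), by positivity, fun θ₂ _ hθ => ?_⟩
  set T := phaseCorrection α β (phase θ₂ - phase θ₁)
  have hsmall : ‖phase θ₂ - phase θ₁‖ * C < ε := by
    calc ‖phase θ₂ - phase θ₁‖ * C ≤ 2 * π * (ε / (2 * π * (C + 1))) * C := by
          gcongr
          exact (norm_phase_sub_phase_le θ₁ θ₂).trans (by gcongr)
      _ = ε * (C / (C + 1)) := by field_simp
      _ < ε := mul_lt_of_lt_one_right hε ((div_lt_one (by positivity)).2 (lt_add_one C))
  have hTF₁ : T '' F₁ ⊆ VSet α β θ₂ :=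
    image_subset_iff.2 fun u hu => VSet.phaseCorrection_mem hα.le hαβ hβ.le (hF₁ hu) θ₂
  refine ⟨F₁.map T, by rwa [Submodule.map_coe], ?_, ?_⟩
  · rw [← hdim]
    exact (Submodule.equivMapOfInjective T phaseCorrection_injective F₁).finrank_eq.symm
  · rw [Submodule.map_coe]
    exact max_lt ((distS_image_phaseCorrection_le hα (hαβ.trans hβ).le hF₁ _).trans_lt hsmall)
      ((distS_phaseCorrection_image_le hα (hαβ.trans hβ).le hTF₁).trans_lt hsmall)

theorem stmt_15 (α β : ℝ) (hα : 0 < α) (hαβ : α < β) (hβ : β < 1)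
    (θ₁ : ℝ) (hθ₁ : θ₁ ∈ Ico (0:ℝ) 1) (k : ℕ) (hk : 1 ≤ k)
    (F₁ : Submodule ℂ (ℝ → ℂ)) (hF₁ : (F₁ : Set (ℝ → ℂ)) ⊆ VSet α β θ₁)
    (hdim : Module.finrank ℂ F₁ = k) :
    ∀ ε > (0:ℝ), ∃ δ > (0:ℝ), ∀ θ₂ ∈ Ico (0:ℝ) 1, |θ₂ - θ₁| ≤ δ →
      ∃ F₂ : Submodule ℂ (ℝ → ℂ), (F₂ : Set (ℝ → ℂ)) ⊆ VSet α β θ₂ ∧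
        Module.finrank ℂ F₂ = k ∧
        max (distS (F₁ : Set (ℝ → ℂ)) (F₂ : Set (ℝ → ℂ)))
            (distS (F₂ : Set (ℝ → ℂ)) (F₁ : Set (ℝ → ℂ))) < ε :=
  stmt_15_general α β hα hαβ hβ θ₁ k F₁ hF₁ hdim

end
end
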